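/- Let W be a standard one-dimensional Brownian motion and let f : [0,∞) × ℝ → ℝ be a measurable, strictly positive function such that for all 0 ≤ s ≤ t, almost surely f(s, W_s) · f(t − s, W_t − W_s) = f(t, W_t). Then for every t ≥ 0 and every p ∈ ℝ, the random variable f(t, W_t)^p has finite expectation: E[f(t, W_t)^p] < ∞. -/

import Mathlib

/-!
Splitting `W t = W (t/2) + (W t - W (t/2))` into two independent nondegenerate Gaussians turns
the hypothesis into Pexider's equation `k x + k y = g (x + y)`, Lebesgue-a.e. on `ℝ²`, for
`g = log f(t, ·)` and `k = log f(t/2, ·)`. A measurable a.e. solution of Cauchy's equation is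
bounded on an interval by a Steinhaus-type overlap argument, and doubling the interval gives
`|g x| ≤ C (1 + |x|)` a.e. Hence `f(t, x)^p ≤ exp (|p| C (1 + |x|))`, which is integrable against
every Gaussian.
-/

open MeasureTheory ProbabilityTheory Real
open scoped NNReal ENNReal

noncomputable section

variable {Ω : Type*} [mΩ : MeasurableSpace Ω]

/-- The σ-algebra generated by the process `W` up to time `t`. -/
def natSigma (W : ℝ → Ω → ℝ) (t : ℝ) : MeasurableSpace Ω :=
  ⨆ s ∈ Set.Icc (0 : ℝ) t, MeasurableSpace.comap (W s) inferInstance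

/-- `W` is a standard one-dimensional Brownian motion under `P`. -/
structure IsStandardBM (P : Measure Ω) (W : ℝ → Ω → ℝ) : Prop where
  isProb : IsProbabilityMeasure P
  init : ∀ ω, W 0 ω = 0
  cont : ∀ ω, Continuous fun t => W t ω
  meas : ∀ t, Measurable (W t)
  gauss : ∀ s t : ℝ, 0 ≤ s → s ≤ t →
    P.map (fun ω => W t ω - W s ω) = gaussianReal 0 (Real.toNNReal (t - s))
  indep : ∀ s t : ℝ, 0 ≤ s → s ≤ t →
    Indep (MeasurableSpace.comap (fun ω => W t ω - W s ω) inferInstance) (natSigma W s) P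

/-- The natural filtration of the process `W`, indexed by nonnegative times. -/
def natFiltration (W : ℝ → Ω → ℝ) (hW : ∀ t, Measurable (W t)) :
    Filtration ℝ≥0 mΩ where
  seq t := natSigma W (t : ℝ)
  mono' s t hst := biSup_mono fun u hu => ⟨hu.1, hu.2.trans (NNReal.coe_le_coe.mpr hst)⟩
  le' t := iSup₂_le fun s _ => measurable_iff_comap_le.mp (hW s)


open Filter Set

def AEAdditive (h : ℝ → ℝ) : Prop :=
  ∀ᵐ z ∂(volume.prod volume : Measure (ℝ × ℝ)), h (z.1 + z.2) = h z.1 + h z.2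

def AELinearGrowth (h : ℝ → ℝ) : Prop :=
  ∃ C, 0 ≤ C ∧ ∀ᵐ x, |h x| ≤ C * (1 + |x|)

lemma exists_measure_lt_abs_inter_lt {α : Type*} [MeasurableSpace α] {μ : Measure α}
    {h : α → ℝ} (hh : Measurable h) {s : Set α} (hs : μ s ≠ ∞) {ε : ℝ≥0∞} (hε : 0 < ε) :
    ∃ M : ℝ, 0 ≤ M ∧ μ ({x | M < |h x|} ∩ s) < ε := by
  have : IsFiniteMeasure (μ.restrict s) := isFiniteMeasure_restrict.2 hs
  have hmeas (n : ℕ) : MeasurableSet {x | (n : ℝ) < |h x|} :=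
    measurableSet_lt measurable_const hh.abs
  have hanti : Antitone fun n : ℕ => {x | (n : ℝ) < |h x|} :=
    fun m n hmn x (hx : (n : ℝ) < |h x|) =>
      show (m : ℝ) < |h x| from (Nat.cast_le.2 hmn).trans_lt hx
  have hempty : ⋂ n : ℕ, {x | (n : ℝ) < |h x|} = ∅ := by
    refine eq_empty_of_forall_notMem fun x hx => ?_
    obtain ⟨n, hn⟩ := exists_nat_ge |h x|
    exact (mem_iInter.1 hx n).not_ge hn
  have htends := tendsto_measure_iInter_atTop (fun n => (hmeas n).nullMeasurableSet) hanti
    ⟨0, measure_ne_top (μ.restrict s) _⟩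
  rw [hempty, measure_empty] at htends
  obtain ⟨n, hn⟩ := (htends.eventually (gt_mem_nhds hε)).exists
  exact ⟨n, n.cast_nonneg, by rwa [Function.comp_apply, Measure.restrict_apply (hmeas n)] at hn⟩

namespace AELinearGrowth

variable {h : ℝ → ℝ}

lemma comp_add_add (hh : AELinearGrowth h) (a b : ℝ) :
    AELinearGrowth fun x => h (x + a) + b := by
  obtain ⟨C, hC, hb⟩ := hh
  refine ⟨C * (1 + |a|) + |b|, by positivity, ?_⟩
  filter_upwards [(measurePreserving_add_right volume a).quasiMeasurePreserving.ae hb] with x hx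
  have hxa : 1 + |x + a| ≤ (1 + |a|) * (1 + |x|) := by
    nlinarith [abs_add_le x a, abs_nonneg a, abs_nonneg x, mul_nonneg (abs_nonneg a) (abs_nonneg x)]
  calc |h (x + a) + b| ≤ |h (x + a)| + |b| := abs_add_le _ _
    _ ≤ C * ((1 + |a|) * (1 + |x|)) + |b| * (1 + |x|) := by
        gcongr
        · exact hx.trans (by gcongr)
        · exact le_mul_of_one_le_right (abs_nonneg b) (by linarith [abs_nonneg x])
    _ = (C * (1 + |a|) + |b|) * (1 + |x|) := by ring

lemma mul_const (hh : AELinearGrowth h) (c : ℝ) : AELinearGrowth fun x => h x * c := by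
  obtain ⟨C, hC, hb⟩ := hh
  refine ⟨C * |c|, by positivity, ?_⟩
  filter_upwards [hb] with x hx
  rw [abs_mul, mul_right_comm]
  gcongr

lemma integrable_exp_gaussianReal (hh : AELinearGrowth h) {μ : ℝ} {v : ℝ≥0} (hv : v ≠ 0)
    (hm : AEStronglyMeasurable h (gaussianReal μ v)) :
    Integrable (fun x => exp (h x)) (gaussianReal μ v) := by
  obtain ⟨C, hC, hb⟩ := hh
  have hexp : Integrable (fun x => exp C * exp (C * |x|)) (gaussianReal μ v) := by
    have := integrable_exp_abs_mul_abs (integrable_exp_mul_gaussianReal (μ := μ) (v := v) C)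
      (integrable_exp_mul_gaussianReal (-C))
    rw [abs_of_nonneg hC] at this
    exact this.const_mul _
  refine hexp.mono' (continuous_exp.comp_aestronglyMeasurable hm) ?_
  filter_upwards [(gaussianReal_absolutelyContinuous μ hv).ae_le hb] with x hx
  rw [norm_of_nonneg (exp_pos _).le, ← exp_add, exp_le_exp]
  rw [mul_add, mul_one] at hx
  linarith [le_abs_self (h x)]

end AELinearGrowth

/-- For `x ∈ (1/4, 3/2)` the overlap of `(0,1)` and `x - (0,1)` has measure `≥ 1/4`, more than
twice what `G` misses of `(0,1)`. -/
lemma volume_setOf_mem_and_sub_mem_ne_zero {G : Set ℝ} (hG : MeasurableSet G)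
    (hbad : volume (Ioo 0 1 \ G) < ENNReal.ofReal (1 / 8)) {x : ℝ}
    (hx : x ∈ Ioo (1 / 4 : ℝ) (3 / 2)) :
    volume {a | a ∈ G ∧ x - a ∈ G} ≠ 0 := by
  intro h0
  set Bad := Ioo 0 1 \ G
  have hcover : Ioo (max 0 (x - 1)) (min 1 x) ⊆
      {a | a ∈ G ∧ x - a ∈ G} ∪ Bad ∪ (fun a => x - a) ⁻¹' Bad := by
    rintro a ⟨ha₁, ha₂⟩
    rw [max_lt_iff] at ha₁
    rw [lt_min_iff] at ha₂
    have hI : a ∈ Ioo (0 : ℝ) 1 := ⟨ha₁.1, ha₂.1⟩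
    have hI' : x - a ∈ Ioo (0 : ℝ) 1 := ⟨by linarith, by linarith⟩
    by_cases hGa : a ∈ G
    · by_cases hGxa : x - a ∈ G
      · exact Or.inl (Or.inl ⟨hGa, hGxa⟩)
      · exact Or.inr ⟨hI', hGxa⟩
    · exact Or.inl (Or.inr ⟨hI, hGa⟩)
  have hpre : volume ((fun a => x - a) ⁻¹' Bad) = volume Bad :=
    (Measure.measurePreserving_sub_left volume x).measure_preimage
      (measurableSet_Ioo.diff hG).nullMeasurableSet
  have : ENNReal.ofReal (1 / 4) < ENNReal.ofReal (1 / 4) := calc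
    ENNReal.ofReal (1 / 4) ≤ volume (Ioo (max 0 (x - 1)) (min 1 x)) := by
        rw [Real.volume_Ioo]
        refine ENNReal.ofReal_le_ofReal ?_
        rw [min_def, max_def]
        split_ifs <;> linarith [hx.1, hx.2]
    _ ≤ volume {a | a ∈ G ∧ x - a ∈ G} + volume Bad + volume ((fun a => x - a) ⁻¹' Bad) :=
        (measure_mono hcover).trans
          ((measure_union_le _ _).trans (add_le_add_left (measure_union_le _ _) _))
    _ < ENNReal.ofReal (1 / 8) + ENNReal.ofReal (1 / 8) := by
        rw [h0, zero_add, hpre]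
        exact ENNReal.add_lt_add hbad hbad
    _ = ENNReal.ofReal (1 / 4) := by
        rw [← ENNReal.ofReal_add] <;> norm_num
  exact lt_irrefl _ this

namespace AEAdditive

variable {h : ℝ → ℝ}

lemma ae_ae_eq_add_sub (hadd : AEAdditive h) : ∀ᵐ x, ∀ᵐ a, h x = h a + h (x - a) := by
  refine Measure.ae_ae_of_ae_prod (p := fun z => h z.1 = h z.2 + h (z.1 - z.2)) ?_
  filter_upwards [(measurePreserving_prod_sub_swap volume volume).quasiMeasurePreserving.ae hadd]
    with z hz
  simpa using hz

lemma ae_ae_eq_add_left_sub (hadd : AEAdditive h) : ∀ᵐ x, ∀ᵐ a, h x = h (a + x) - h a := by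
  refine Measure.ae_ae_of_ae_prod (p := fun z => h z.1 = h (z.2 + z.1) - h z.2) ?_
  filter_upwards [Measure.measurePreserving_swap.quasiMeasurePreserving.ae hadd] with z hz
  simp only [Prod.fst_swap, Prod.snd_swap] at hz
  linarith

lemma ae_abs_le_add (hadd : AEAdditive h) {S₁ S₂ : Set ℝ} {c₁ c₂ : ℝ}
    (h₁ : ∀ᵐ a, a ∈ S₁ → |h a| ≤ c₁) (h₂ : ∀ᵐ b, b ∈ S₂ → |h b| ≤ c₂) :
    ∀ᵐ x, volume {a | a ∈ S₁ ∧ x - a ∈ S₂} ≠ 0 → |h x| ≤ c₁ + c₂ := by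
  filter_upwards [hadd.ae_ae_eq_add_sub] with x hx hpos
  have h₂' : ∀ᵐ a, x - a ∈ S₂ → |h (x - a)| ≤ c₂ :=
    (Measure.measurePreserving_sub_left volume x).quasiMeasurePreserving.ae h₂
  obtain ⟨a, ⟨ha₁, ha₂⟩, heq, hb₁, hb₂⟩ :=
    ((frequently_ae_mem_iff.2 hpos).and_eventually (hx.and (h₁.and h₂'))).exists
  calc |h x| = |h a + h (x - a)| := by rw [heq]
    _ ≤ |h a| + |h (x - a)| := abs_add_le _ _
    _ ≤ c₁ + c₂ := add_le_add (hb₁ ha₁) (hb₂ ha₂)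

lemma ae_abs_le_two_mul (hadd : AEAdditive h) {l r c : ℝ} (hlr : l < r)
    (hb : ∀ᵐ x, x ∈ Ioo l r → |h x| ≤ c) :
    ∀ᵐ x, x ∈ Ioo (2 * l) (2 * r) → |h x| ≤ 2 * c := by
  filter_upwards [hadd.ae_abs_le_add hb hb] with x hx ⟨hlx, hxr⟩
  rw [two_mul]
  refine hx (ne_of_gt ?_)
  calc 0 < volume (Ioo (max l (x - r)) (min r (x - l))) := by
        rw [Real.volume_Ioo, ENNReal.ofReal_pos, sub_pos]
        exact max_lt (lt_min hlr (by linarith)) (lt_min (by linarith) (by linarith))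
    _ ≤ volume {a | a ∈ Ioo l r ∧ x - a ∈ Ioo l r} := by
        refine measure_mono fun a ⟨ha₁, ha₂⟩ => ?_
        rw [max_lt_iff] at ha₁
        rw [lt_min_iff] at ha₂
        exact ⟨⟨ha₁.1, ha₂.1⟩, by linarith, by linarith⟩

lemma ae_abs_le_two_pow_mul (hadd : AEAdditive h) {l r c : ℝ} (hlr : l < r)
    (hb : ∀ᵐ x, x ∈ Ioo l r → |h x| ≤ c) (k : ℕ) :
    ∀ᵐ x, x ∈ Ioo (2 ^ k * l) (2 ^ k * r) → |h x| ≤ 2 ^ k * c := by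
  induction k with
  | zero => simpa using hb
  | succ k ih =>
    simpa only [pow_succ', mul_assoc] using
      hadd.ae_abs_le_two_mul (mul_lt_mul_of_pos_left hlr (by positivity)) ih

lemma exists_ae_abs_le_on_Ioo (hadd : AEAdditive h) (hm : Measurable h) :
    ∃ M, 0 ≤ M ∧ ∀ᵐ x, x ∈ Ioo (1 / 4 : ℝ) (3 / 2) → |h x| ≤ M := by
  obtain ⟨M, hM, hbad⟩ := exists_measure_lt_abs_inter_lt (μ := volume) hm (s := Ioo (0 : ℝ) 1)
    (by simp) (ε := ENNReal.ofReal (1 / 8)) (ENNReal.ofReal_pos.2 (by norm_num))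
  have hG : ∀ᵐ a, a ∈ {a | |h a| ≤ M} → |h a| ≤ M := ae_of_all _ fun _ ha => ha
  have hdiff : Ioo (0 : ℝ) 1 \ {a | |h a| ≤ M} = {a | M < |h a|} ∩ Ioo 0 1 := by
    ext a
    simp [and_comm]
  refine ⟨M + M, by positivity, ?_⟩
  filter_upwards [hadd.ae_abs_le_add hG hG] with x hx hxI
  exact hx (volume_setOf_mem_and_sub_mem_ne_zero (measurableSet_le hm.abs measurable_const)
    (by rwa [hdiff]) hxI)

lemma exists_ae_abs_le_mul_of_half_lt (hadd : AEAdditive h) (hm : Measurable h) :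
    ∃ M, 0 ≤ M ∧ ∀ᵐ x, 1 / 2 < x → |h x| ≤ M * x := by
  obtain ⟨M, hM, hb⟩ := hadd.exists_ae_abs_le_on_Ioo hm
  refine ⟨2 * M, by positivity, ?_⟩
  filter_upwards [ae_all_iff.2 (hadd.ae_abs_le_two_pow_mul (by norm_num) hb)] with x hx hx'
  obtain ⟨k, hk, hk'⟩ := exists_nat_pow_near (by linarith : 1 ≤ 2 * x) one_lt_two
  have h2k : (0 : ℝ) < 2 ^ k := by positivity
  rw [pow_succ] at hk'
  calc |h x| ≤ 2 ^ k * M := hx k ⟨by linarith, by linarith⟩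
    _ ≤ 2 * x * M := by gcongr
    _ = 2 * M * x := by ring

lemma aeLinearGrowth (hadd : AEAdditive h) (hm : Measurable h) : AELinearGrowth h := by
  obtain ⟨M, hM, hb⟩ := hadd.exists_ae_abs_le_mul_of_half_lt hm
  refine ⟨4 * M, by positivity, ?_⟩
  filter_upwards [hadd.ae_ae_eq_add_left_sub] with x hx
  have hb' : ∀ᵐ a, 1 / 2 < a + x → |h (a + x)| ≤ M * (a + x) :=
    (measurePreserving_add_right volume x).quasiMeasurePreserving.ae hb
  have hI : volume (Ioo (|x| + 1) (|x| + 2)) ≠ 0 := by simp [Real.volume_Ioo]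
  obtain ⟨a, ⟨ha₁, ha₂⟩, heq, hba, hbax⟩ :=
    ((frequently_ae_mem_iff.2 hI).and_eventually (hx.and (hb.and hb'))).exists
  have hx₁ := neg_abs_le x
  have hx₂ := le_abs_self x
  calc |h x| = |h (a + x) - h a| := by rw [heq]
    _ ≤ |h (a + x)| + |h a| := abs_sub _ _
    _ ≤ M * (a + x) + M * a := add_le_add (hbax (by linarith)) (hba (by linarith))
    _ ≤ 4 * M * (1 + |x|) := by
        nlinarith [mul_le_mul_of_nonneg_left (show 2 * a + x ≤ 3 * |x| + 4 by linarith) hM,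
          mul_nonneg hM (abs_nonneg x)]

end AEAdditive

/-- Pexider's equation `k x + k y = g (x + y)` reduces to Cauchy's equation for
`w ↦ g (w + 2 x₀) - 2 k x₀`, with `x₀` a generic point. -/
lemma aeLinearGrowth_of_ae_add_eq {g k : ℝ → ℝ} (hg : Measurable g)
    (heq : ∀ᵐ z ∂(volume.prod volume : Measure (ℝ × ℝ)), k z.1 + k z.2 = g (z.1 + z.2)) :
    AELinearGrowth g := by
  obtain ⟨x₀, hx₀⟩ := (Measure.ae_ae_of_ae_prod heq).exists
  have hk : ∀ᵐ z ∂(volume.prod volume : Measure (ℝ × ℝ)),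
      k z.1 = g (x₀ + z.1) - k x₀ ∧ k z.2 = g (x₀ + z.2) - k x₀ := by
    filter_upwards [Measure.quasiMeasurePreserving_fst.ae hx₀,
      Measure.quasiMeasurePreserving_snd.ae hx₀] with z h₁ h₂
    exact ⟨by linarith, by linarith⟩
  set h : ℝ → ℝ := fun w => g (w + 2 * x₀) - 2 * k x₀ with hh
  have hadd : AEAdditive h := by
    have hT := (measurePreserving_add_right volume x₀).prod (measurePreserving_add_right volume x₀)
    filter_upwards [hT.quasiMeasurePreserving.ae heq, hT.quasiMeasurePreserving.ae hk]
      with z h₁ ⟨h₂, h₃⟩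
    simp only [Prod.map_fst, Prod.map_snd] at h₁ h₂ h₃
    rw [h₂, h₃] at h₁
    simp only [hh]
    rw [show x₀ + (z.1 + x₀) = z.1 + 2 * x₀ by ring, show x₀ + (z.2 + x₀) = z.2 + 2 * x₀ by ring,
      show z.1 + x₀ + (z.2 + x₀) = z.1 + z.2 + 2 * x₀ by ring] at h₁
    linarith
  have hgh : g = fun x => h (x + -(2 * x₀)) + 2 * k x₀ := by
    funext x
    simp [hh]
  rw [hgh]
  exact (hadd.aeLinearGrowth ((hg.comp (measurable_add_const _)).sub_const _)).comp_add_add _ _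

namespace IsStandardBM

variable {P : Measure Ω} {W : ℝ → Ω → ℝ}

lemma map_eq_gaussianReal (hBM : IsStandardBM P W) {t : ℝ} (ht : 0 ≤ t) :
    P.map (W t) = gaussianReal 0 t.toNNReal := by
  simpa [hBM.init] using hBM.gauss 0 t le_rfl ht

lemma indepFun_increment (hBM : IsStandardBM P W) {s t : ℝ} (hs : 0 ≤ s) (hst : s ≤ t) :
    IndepFun (W s) (fun ω => W t ω - W s ω) P := by
  rw [IndepFun_iff_Indep]
  exact indep_of_indep_of_le_left (hBM.indep s t hs hst).symm
    (le_iSup₂_of_le (f := fun u (_ : u ∈ Icc 0 s) => MeasurableSpace.comap (W u) inferInstance)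
      s ⟨hs, le_rfl⟩ le_rfl)

lemma map_increment_prod (hBM : IsStandardBM P W) {s t : ℝ} (hs : 0 ≤ s) (hst : s ≤ t) :
    P.map (fun ω => (W s ω, W t ω - W s ω)) =
      (gaussianReal 0 s.toNNReal).prod (gaussianReal 0 (t - s).toNNReal) := by
  have := hBM.isProb
  have := hBM.meas
  rw [(indepFun_iff_map_prod_eq_prod_map_map (hBM.meas s).aemeasurable
      (by fun_prop : Measurable fun ω => W t ω - W s ω).aemeasurable).1
      (hBM.indepFun_increment hs hst),
    hBM.map_eq_gaussianReal hs, hBM.gauss s t hs hst]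

/-- Both increments are nondegenerate Gaussians, whose product dominates Lebesgue measure. -/
lemma ae_volume_prod_of_ae (hBM : IsStandardBM P W) {s t : ℝ} (hs : 0 < s) (hst : s < t)
    {p : ℝ × ℝ → Prop} (hp : MeasurableSet {z | p z})
    (h : ∀ᵐ ω ∂P, p (W s ω, W t ω - W s ω)) :
    ∀ᵐ z ∂(volume.prod volume : Measure (ℝ × ℝ)), p z := by
  have hac : (volume.prod volume : Measure (ℝ × ℝ)) ≪
      (gaussianReal 0 s.toNNReal).prod (gaussianReal 0 (t - s).toNNReal) :=
    (gaussianReal_absolutelyContinuous' 0 (Real.toNNReal_pos.2 hs).ne').prod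
      (gaussianReal_absolutelyContinuous' 0 (Real.toNNReal_pos.2 (sub_pos.2 hst)).ne')
  have := hBM.meas
  have hG : ∀ᵐ z ∂(P.map fun ω => (W s ω, W t ω - W s ω)), p z :=
    (ae_map_iff (by fun_prop) hp).2 h
  rw [hBM.map_increment_prod hs.le hst.le] at hG
  exact hac.ae_le hG

end IsStandardBM

/-- Under the a.s. multiplicative identity along Brownian motion,
`f (t, W t)` has finite moments of every real order `p`. -/
theorem stmt9 (P : Measure Ω) (W : ℝ → Ω → ℝ) (hBM : IsStandardBM P W)
    (f : ℝ → ℝ → ℝ)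
    (hmeas : Measurable (Function.uncurry f))
    (hpos : ∀ u v : ℝ, 0 ≤ u → 0 < f u v)
    (hfe : ∀ s t : ℝ, 0 ≤ s → s ≤ t →
      ∀ᵐ ω ∂P, f s (W s ω) * f (t - s) (W t ω - W s ω) = f t (W t ω)) :
    ∀ t : ℝ, 0 ≤ t → ∀ p : ℝ, Integrable (fun ω => f t (W t ω) ^ p) P := by
  have := hBM.isProb
  intro t ht p
  rcases ht.eq_or_lt with rfl | ht
  · simp only [hBM.init]
    exact integrable_const _
  have hf (u : ℝ) : Measurable (f u) := hmeas.comp measurable_prodMk_left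
  have hsplit : ∀ᵐ z ∂(volume.prod volume : Measure (ℝ × ℝ)),
      log (f (t / 2) z.1) + log (f (t / 2) z.2) = log (f t (z.1 + z.2)) := by
    refine hBM.ae_volume_prod_of_ae (half_pos ht) (half_lt_self ht)
      (measurableSet_eq_fun (by fun_prop) (by fun_prop)) ?_
    filter_upwards [hfe (t / 2) t (half_pos ht).le (half_le_self ht.le)] with ω hω
    rw [sub_half] at hω
    rw [← log_mul (hpos _ _ (half_pos ht).le).ne' (hpos _ _ (half_pos ht).le).ne', hω,
      add_sub_cancel]
  have hint : Integrable (fun x => f t x ^ p) (gaussianReal 0 t.toNNReal) := by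
    simp_rw [rpow_def_of_pos (hpos t _ ht.le)]
    have hlin := aeLinearGrowth_of_ae_add_eq (k := fun x => log (f (t / 2) x)) (hf t).log hsplit
    exact (hlin.mul_const p).integrable_exp_gaussianReal (Real.toNNReal_pos.2 ht).ne'
      ((hf t).log.mul_const p).aestronglyMeasurable
  rw [← hBM.map_eq_gaussianReal ht.le] at hint
  exact hint.comp_measurable (hBM.meas t)

end
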